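/- Let M be a compact metric space with base point 0 and let f ∈ S_{Lip_0(M)} be a w*-Δ-point. Then f is local. -/

import Mathlib

open Metric Set Filter NNReal

noncomputable section

/-- The old Mathlib `NormedSpace.Dual` (topology on `E` from its norm). -/
abbrev NormedSpace.Dual (𝕜 : Type*) (E : Type*) [NontriviallyNormedField 𝕜]
    [SeminormedAddCommGroup E] [NormedSpace 𝕜 E] : Type _ := E →L[𝕜] 𝕜

namespace DeltaPaper

/-! ### Generic Banach space notions -/

variable {X : Type*} [NormedAddCommGroup X] [NormedSpace ℝ X]

/-- `x` is a Daugavet-point: every slice of the unit ball contains, for every `ε > 0`,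
an element at distance at least `2 - ε` from `x`. -/
def IsDaugavetPoint (x : X) : Prop :=
  ∀ (φ : NormedSpace.Dual ℝ X) (α : ℝ), ‖φ‖ = 1 → 0 < α → ∀ ε > 0,
    ∃ y : X, ‖y‖ ≤ 1 ∧ 1 - α < φ y ∧ 2 - ε ≤ ‖x - y‖

/-- `x` is a Δ-point: every slice of the unit ball containing `x` contains, for every
`ε > 0`, an element at distance at least `2 - ε` from `x`. -/
def IsDeltaPoint (x : X) : Prop :=
  ∀ (φ : NormedSpace.Dual ℝ X) (α : ℝ), ‖φ‖ = 1 → 0 < α → 1 - α < φ x → ∀ ε > 0,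
    ∃ y : X, ‖y‖ ≤ 1 ∧ 1 - α < φ y ∧ 2 - ε ≤ ‖x - y‖

/-- `x*` is a w*-Daugavet-point of the dual of `X`. -/
def IsWeakStarDaugavetPoint (f : NormedSpace.Dual ℝ X) : Prop :=
  ∀ (x : X) (α : ℝ), ‖x‖ = 1 → 0 < α → ∀ ε > 0,
    ∃ g : NormedSpace.Dual ℝ X, ‖g‖ ≤ 1 ∧ 1 - α < g x ∧ 2 - ε ≤ ‖f - g‖

/-- `x*` is a w*-Δ-point of the dual of `X`. -/
def IsWeakStarDeltaPoint (f : NormedSpace.Dual ℝ X) : Prop :=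
  ∀ (x : X) (α : ℝ), ‖x‖ = 1 → 0 < α → 1 - α < f x → ∀ ε > 0,
    ∃ g : NormedSpace.Dual ℝ X, ‖g‖ ≤ 1 ∧ 1 - α < g x ∧ 2 - ε ≤ ‖f - g‖

/-- `x` is a denting point of the unit ball: it lies in slices of the unit ball of
arbitrarily small diameter. -/
def IsDentingPoint (x : X) : Prop :=
  ‖x‖ ≤ 1 ∧ ∀ ε > 0, ∃ (φ : NormedSpace.Dual ℝ X) (α : ℝ), ‖φ‖ = 1 ∧ 0 < α ∧
    1 - α < φ x ∧ Metric.diam {y : X | ‖y‖ ≤ 1 ∧ 1 - α < φ y} < ε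

/-- The Kuratowski measure of non-compactness of a set: the infimum of all `ε > 0`
such that the set can be covered by finitely many sets of diameter less than `ε`. -/
def kuratowski {Y : Type*} [PseudoMetricSpace Y] (A : Set Y) : ℝ :=
  sInf {ε : ℝ | 0 < ε ∧ ∃ 𝒞 : Finset (Set Y), (A ⊆ ⋃ B ∈ 𝒞, B) ∧ ∀ B ∈ 𝒞, Metric.diam B < ε}

/-! ### The space of Lipschitz functions vanishing at a base point -/

variable {M : Type*} [PseudoMetricSpace M]

/-- The least Lipschitz constant of a function. -/
def lipConst (f : M → ℝ) : ℝ≥0 := sInf {K | LipschitzWith K f}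

theorem lipschitzWith_lipConst {f : M → ℝ} (hf : ∃ K, LipschitzWith K f) :
    LipschitzWith (lipConst f) f := by
  obtain ⟨K₀, hK₀⟩ := hf
  rw [lipschitzWith_iff_dist_le_mul]
  intro x y
  rcases le_or_gt (dist x y) 0 with h | h
  · have h0 : dist x y = 0 := le_antisymm h dist_nonneg
    have := hK₀.dist_le_mul x y
    rw [h0, mul_zero] at this ⊢
    exact this
  · rw [← div_le_iff₀ h]
    have hnn : 0 ≤ dist (f x) (f y) / dist x y := by positivity
    rw [← Real.coe_toNNReal _ hnn, NNReal.coe_le_coe]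
    refine le_csInf ⟨K₀, hK₀⟩ ?_
    intro K hK
    rw [← NNReal.coe_le_coe, Real.coe_toNNReal _ hnn, div_le_iff₀ h]
    exact hK.dist_le_mul x y

theorem lipConst_le {f : M → ℝ} {K : ℝ≥0} (hK : LipschitzWith K f) : lipConst f ≤ K :=
  csInf_le (OrderBot.bddBelow _) hK

theorem lipschitzWith_smul {f : M → ℝ} {K : ℝ≥0} (hK : LipschitzWith K f) (c : ℝ) :
    LipschitzWith (‖c‖₊ * K) (c • f) := by
  rw [lipschitzWith_iff_dist_le_mul] at *
  intro x y
  have : dist ((c • f) x) ((c • f) y) = ‖c‖ * dist (f x) (f y) := by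
    simp only [Pi.smul_apply, smul_eq_mul, Real.dist_eq, ← mul_sub, abs_mul, Real.norm_eq_abs]
  rw [this, NNReal.coe_mul, coe_nnnorm, mul_assoc]
  exact mul_le_mul_of_nonneg_left (hK x y) (norm_nonneg c)

variable (M) in
/-- The submodule of `M → ℝ` consisting of Lipschitz functions vanishing at the
base point `z`. -/
def Lip0 (z : M) : Submodule ℝ (M → ℝ) where
  carrier := {f | (∃ K, LipschitzWith K f) ∧ f z = 0}
  add_mem' := by
    rintro f g ⟨⟨K, hK⟩, hf0⟩ ⟨⟨L, hL⟩, hg0⟩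
    exact ⟨⟨K + L, hK.add hL⟩, by simp [hf0, hg0]⟩
  zero_mem' := ⟨⟨0, LipschitzWith.const' 0⟩, rfl⟩
  smul_mem' := by
    rintro c f ⟨⟨K, hK⟩, hf0⟩
    exact ⟨⟨‖c‖₊ * K, lipschitzWith_smul hK c⟩, by simp [hf0]⟩

variable {z : M}

instance : NormedAddCommGroup ↥(Lip0 M z) :=
  AddGroupNorm.toNormedAddCommGroup
    { toFun := fun f => ((lipConst (f : M → ℝ) : ℝ≥0) : ℝ)
      map_zero' := by
        have h0 : lipConst (0 : M → ℝ) = 0 :=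
          le_antisymm (lipConst_le (by simpa using LipschitzWith.const' (0 : ℝ))) bot_le
        show ((lipConst ((0 : ↥(Lip0 M z)) : M → ℝ) : ℝ≥0) : ℝ) = 0
        rw [show ((0 : ↥(Lip0 M z)) : M → ℝ) = 0 from rfl, h0, NNReal.coe_zero]
      add_le' := by
        intro f g
        have hf := lipschitzWith_lipConst f.2.1
        have hg := lipschitzWith_lipConst g.2.1
        have : lipConst ((f + g : ↥(Lip0 M z)) : M → ℝ) ≤
            lipConst (f : M → ℝ) + lipConst (g : M → ℝ) := by
          refine lipConst_le ?_
          have := hf.add hg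
          exact this
        exact_mod_cast this
      neg' := by
        intro f
        show ((lipConst ((-f : ↥(Lip0 M z)) : M → ℝ) : ℝ≥0) : ℝ) = _
        rw [show ((-f : ↥(Lip0 M z)) : M → ℝ) = -(f : M → ℝ) from rfl]
        unfold lipConst
        congr 2
        ext K
        exact ⟨fun hK => by simpa using hK.neg, fun hK => hK.neg⟩
      eq_zero_of_map_eq_zero' := by
        intro f hf
        replace hf : ((lipConst (f : M → ℝ) : ℝ≥0) : ℝ) = 0 := hf
        have h0 : lipConst (f : M → ℝ) = 0 := by exact_mod_cast hf
        have hl : LipschitzWith 0 (f : M → ℝ) := h0 ▸ lipschitzWith_lipConst f.2.1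
        ext x
        have := hl.dist_le_mul x z
        simp only [NNReal.coe_zero, zero_mul] at this
        have hxz : (f : M → ℝ) x = (f : M → ℝ) z :=
          dist_le_zero.mp this
        simpa [f.2.2] using hxz }

theorem Lip0.norm_def (f : ↥(Lip0 M z)) : ‖f‖ = ((lipConst (f : M → ℝ) : ℝ≥0) : ℝ) := rfl

theorem Lip0.lipschitzWith (f : ↥(Lip0 M z)) : LipschitzWith (lipConst (f : M → ℝ)) (f : M → ℝ) :=
  lipschitzWith_lipConst f.2.1

instance : NormedSpace ℝ ↥(Lip0 M z) where
  norm_smul_le c f := by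
    have : lipConst ((c • f : ↥(Lip0 M z)) : M → ℝ) ≤ ‖c‖₊ * lipConst (f : M → ℝ) :=
      lipConst_le (lipschitzWith_smul (Lip0.lipschitzWith f) c)
    calc ‖c • f‖ = ((lipConst ((c • f : ↥(Lip0 M z)) : M → ℝ) : ℝ≥0) : ℝ) := rfl
      _ ≤ ((‖c‖₊ * lipConst (f : M → ℝ) : ℝ≥0) : ℝ) := by exact_mod_cast this
      _ = ‖c‖ * ‖f‖ := by push_cast [Lip0.norm_def]; rfl

variable (M z) in
/-- The evaluation functional `δ_x ∈ Lip₀(M)*`. -/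
def evalδ (x : M) : NormedSpace.Dual ℝ ↥(Lip0 M z) :=
  LinearMap.mkContinuous
    { toFun := fun f => (f : M → ℝ) x
      map_add' := fun f g => rfl
      map_smul' := fun c f => rfl }
    (dist x z)
    (by
      intro f
      have := (Lip0.lipschitzWith f).dist_le_mul x z
      simp only [f.2.2, Real.dist_eq, sub_zero] at this
      calc ‖(f : M → ℝ) x‖ = |(f : M → ℝ) x - 0| := by simp
        _ ≤ (lipConst (f : M → ℝ) : ℝ) * dist x z := by
            simpa [f.2.2, Real.dist_eq] using (Lip0.lipschitzWith f).dist_le_mul x z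
        _ = dist x z * ‖f‖ := by rw [Lip0.norm_def, mul_comm])

variable (M z) in
/-- The Lipschitz-free space over `M`: the closed linear span of the evaluation
functionals inside `Lip₀(M)*`. -/
def FreeSpace : Submodule ℝ (NormedSpace.Dual ℝ ↥(Lip0 M z)) :=
  (Submodule.span ℝ (Set.range (evalδ M z))).topologicalClosure

variable (M z) in
/-- The molecule `m_{x y} = (δ_x - δ_y)/d(x,y)` as an element of `Lip₀(M)*`. -/
def molecule (x y : M) : NormedSpace.Dual ℝ ↥(Lip0 M z) :=
  (dist x y)⁻¹ • (evalδ M z x - evalδ M z y)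

theorem molecule_mem_freeSpace (x y : M) : molecule M z x y ∈ FreeSpace M z :=
  Submodule.le_topologicalClosure _
    (Submodule.smul_mem _ _ (Submodule.sub_mem _
      (Submodule.subset_span ⟨x, rfl⟩) (Submodule.subset_span ⟨y, rfl⟩)))

variable (M z) in
/-- The molecule `m_{x y}` as an element of the free space `F(M)`. -/
def mol (x y : M) : ↥(FreeSpace M z) := ⟨molecule M z x y, molecule_mem_freeSpace x y⟩

variable (M) in
/-- A metric space is uniformly discrete if distances between distinct points are
bounded below by a positive constant. -/
def UniformlyDiscrete : Prop := ∃ θ > (0:ℝ), ∀ x y : M, x ≠ y → θ ≤ dist x y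

/-- A norm-one Lipschitz function is local if its Lipschitz constant is approximated
on pairs of arbitrarily close points. -/
def IsLocal (f : ↥(Lip0 M z)) : Prop :=
  ∀ ε > 0, ∃ u v : M, u ≠ v ∧
    ‖f‖ - ε < ((f : M → ℝ) u - (f : M → ℝ) v) / dist u v ∧ dist u v < ε

/-- `f ∈ S_{Lip₀(M)}` is a w*-Daugavet-point: for every w*-slice `S(μ, α)` of
`B_{Lip₀(M)}` (`μ` a norm-one element of `F(M)`) and every `ε > 0` there is `g` in the
slice with `‖f - g‖ ≥ 2 - ε`. -/
def IsLipWeakStarDaugavetPoint (f : ↥(Lip0 M z)) : Prop :=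
  ∀ μ : NormedSpace.Dual ℝ ↥(Lip0 M z), μ ∈ FreeSpace M z → ‖μ‖ = 1 → ∀ α > (0:ℝ), ∀ ε > (0:ℝ),
    ∃ g : ↥(Lip0 M z), ‖g‖ ≤ 1 ∧ 1 - α < μ g ∧ 2 - ε ≤ ‖f - g‖

/-- `f ∈ S_{Lip₀(M)}` is a w*-Δ-point: the same as above, but only for w*-slices
containing `f`. -/
def IsLipWeakStarDeltaPoint (f : ↥(Lip0 M z)) : Prop :=
  ∀ μ : NormedSpace.Dual ℝ ↥(Lip0 M z), μ ∈ FreeSpace M z → ‖μ‖ = 1 → ∀ α > (0:ℝ),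
    1 - α < μ f → ∀ ε > (0:ℝ),
    ∃ g : ↥(Lip0 M z), ‖g‖ ≤ 1 ∧ 1 - α < μ g ∧ 2 - ε ≤ ‖f - g‖

end DeltaPaper

open DeltaPaper NormedSpace

/-! If `f` is not local, the pairs on which `f` almost attains its norm have length at least
some `δ > 0`. By compactness of `M × M` they are covered by `δ/2`-balls around at most `K` of
them, with `K` independent of how close to norming the pairs are required to be. The average
`μ` of the corresponding molecules lies in `F(M)` and almost norms `f`, so the w*-Δ-property
gives `g` in the slice of `μ` with `‖f - g‖` close to `2`. Since there are at most `K`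
molecules, `g` almost norms each of them; and `‖f - g‖ ≈ 2` yields a pair `(x, y)` almost
norming `f` on which `g` almost norms the reversed pair `(y, x)`. This pair lies within `δ/2`
of a pair of the net that `g` almost norms in the other direction, impossible for a
`1`-Lipschitz `g` since both pairs have length at least `δ`. -/

namespace DeltaPaper

theorem exists_card_le_forall_subset_ball_cover {X : Type*} [PseudoMetricSpace X]
    (hX : TotallyBounded (univ : Set X)) {r : ℝ} (hr : 0 < r) :
    ∃ K : ℕ, ∀ S : Set X, ∃ F : Finset X, ↑F ⊆ S ∧ F.card ≤ K ∧ S ⊆ ⋃ w ∈ F, ball w r := by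
  classical
  obtain ⟨T, hT, hcover⟩ := totallyBounded_iff.mp hX (r / 2) (half_pos hr)
  refine ⟨hT.toFinset.card, fun S => ?_⟩
  let pick : X → X := fun t => if h : (S ∩ ball t (r / 2)).Nonempty then h.choose else t
  have pick_mem {t : X} (h : (S ∩ ball t (r / 2)).Nonempty) : pick t ∈ S ∩ ball t (r / 2) := by
    simpa only [pick, dif_pos h] using h.choose_spec
  refine ⟨(hT.toFinset.filter fun t => (S ∩ ball t (r / 2)).Nonempty).image pick,
    ?_, Finset.card_image_le.trans (Finset.card_filter_le _ _), fun s hs => ?_⟩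
  · intro w hw
    obtain ⟨t, ht, rfl⟩ := Finset.mem_image.mp hw
    exact (pick_mem (Finset.mem_filter.mp ht).2).1
  · obtain ⟨t, htT, hst⟩ := mem_iUnion₂.mp (hcover (mem_univ s))
    have hne : (S ∩ ball t (r / 2)).Nonempty := ⟨s, hs, hst⟩
    refine mem_iUnion₂.mpr ⟨pick t, Finset.mem_image_of_mem _ ?_, ?_⟩
    · exact Finset.mem_filter.mpr ⟨hT.mem_toFinset.mpr htT, hne⟩
    · calc dist s (pick t) ≤ dist s t + dist (pick t) t := dist_triangle_right _ _ _
        _ < r / 2 + r / 2 := add_lt_add hst (pick_mem hne).2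
        _ = r := add_halves r

theorem lt_of_card_mul_one_sub_lt_sum {ι : Type*} {s : Finset ι} {a : ι → ℝ} {β : ℝ}
    (ha : ∀ i ∈ s, a i ≤ 1) (hsum : s.card * (1 - β) < ∑ i ∈ s, a i) {i : ι} (hi : i ∈ s) :
    1 - s.card * β < a i := by
  classical
  have hrest : ∑ j ∈ s.erase i, a j ≤ s.card - 1 := by
    have := (s.erase i).sum_le_card_nsmul a 1 fun j hj => ha j (Finset.mem_of_mem_erase hj)
    rw [Finset.card_erase_of_mem hi, nsmul_one, Nat.cast_sub (Finset.card_pos.mpr ⟨i, hi⟩)] at this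
    simpa using this
  rw [← s.add_sum_erase a hi] at hsum
  linarith

section Lip0

variable {M : Type*} [PseudoMetricSpace M] {z : M}

theorem Lip0.abs_sub_le (f : ↥(Lip0 M z)) (x y : M) :
    |(f : M → ℝ) x - (f : M → ℝ) y| ≤ ‖f‖ * dist x y := by
  simpa only [Real.dist_eq, Lip0.norm_def] using (Lip0.lipschitzWith f).dist_le_mul x y

theorem Lip0.sub_le_dist {f : ↥(Lip0 M z)} (hf : ‖f‖ ≤ 1) (x y : M) :
    (f : M → ℝ) x - (f : M → ℝ) y ≤ dist x y :=
  (le_abs_self _).trans ((Lip0.abs_sub_le f x y).trans (mul_le_of_le_one_left dist_nonneg hf))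

theorem Lip0.dist_pos_of_mul_dist_lt_sub (f : ↥(Lip0 M z)) {c : ℝ} {x y : M}
    (h : c * dist x y < (f : M → ℝ) x - (f : M → ℝ) y) : 0 < dist x y := by
  refine dist_nonneg.lt_of_ne fun h0 => ?_
  have := (le_abs_self _).trans (Lip0.abs_sub_le f x y)
  rw [← h0, mul_zero] at h this
  linarith

theorem Lip0.exists_mul_dist_lt_sub {f : ↥(Lip0 M z)} {c : ℝ} (hc0 : 0 ≤ c) (hc : c < ‖f‖) :
    ∃ x y : M, c * dist x y < (f : M → ℝ) x - (f : M → ℝ) y := by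
  by_contra! h
  have hlip : LipschitzWith c.toNNReal (f : M → ℝ) := .of_dist_le_mul fun x y => by
    rw [Real.dist_eq, Real.coe_toNNReal _ hc0, abs_sub_le_iff]
    exact ⟨h x y, dist_comm x y ▸ h y x⟩
  have : ‖f‖ ≤ c := by
    simpa only [Lip0.norm_def, Real.coe_toNNReal _ hc0] using
      NNReal.coe_le_coe.mpr (lipConst_le hlip)
  linarith

theorem molecule_apply (x y : M) (g : ↥(Lip0 M z)) :
    molecule M z x y g = ((g : M → ℝ) x - (g : M → ℝ) y) / dist x y :=
  inv_mul_eq_div _ _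

theorem lt_molecule_apply_iff {x y : M} (hxy : 0 < dist x y) (g : ↥(Lip0 M z)) {c : ℝ} :
    c < molecule M z x y g ↔ c * dist x y < (g : M → ℝ) x - (g : M → ℝ) y := by
  rw [molecule_apply, lt_div_iff₀ hxy]

theorem norm_molecule_le (x y : M) : ‖molecule M z x y‖ ≤ 1 :=
  ContinuousLinearMap.opNorm_le_bound _ zero_le_one fun g => by
    rw [molecule_apply, Real.norm_eq_abs, abs_div, abs_dist, one_mul]
    exact div_le_of_le_mul₀ dist_nonneg (norm_nonneg g) (Lip0.abs_sub_le g x y)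

theorem Lip0.sub_add_sub_le_two_mul_dist {g : ↥(Lip0 M z)} (hg : ‖g‖ ≤ 1) (v w : M × M) :
    (g : M → ℝ) v.1 - (g : M → ℝ) v.2 + ((g : M → ℝ) w.2 - (g : M → ℝ) w.1) ≤ 2 * dist v w := by
  have h1 := Lip0.sub_le_dist hg v.1 w.1
  have h2 := Lip0.sub_le_dist hg w.2 v.2
  rw [dist_comm] at h2
  rw [Prod.dist_eq]
  linarith [le_max_left (dist v.1 w.1) (dist v.2 w.2), le_max_right (dist v.1 w.1) (dist v.2 w.2)]

theorem exists_slopes_of_two_sub_lt_norm_sub {f g : ↥(Lip0 M z)} (hf : ‖f‖ ≤ 1) (hg : ‖g‖ ≤ 1)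
    {ε : ℝ} (hε : ε ≤ 2) (hfg : 2 - ε < ‖f - g‖) :
    ∃ x y : M, (1 - ε) * dist x y < (f : M → ℝ) x - (f : M → ℝ) y ∧
      (1 - ε) * dist x y < (g : M → ℝ) y - (g : M → ℝ) x := by
  obtain ⟨x, y, hxy⟩ := Lip0.exists_mul_dist_lt_sub (by linarith) hfg
  have hf' := Lip0.sub_le_dist hf x y
  have hg' := Lip0.sub_le_dist hg y x
  rw [dist_comm] at hg'
  exact ⟨x, y, by simp only [Submodule.coe_sub, Pi.sub_apply] at hxy; constructor <;> linarith⟩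

/-- Normalizing a functional of norm at most one costs at most a factor two in the width of
the slice. -/
theorem IsLipWeakStarDeltaPoint.exists_far_of_norm_le_one {f : ↥(Lip0 M z)}
    (hΔ : IsLipWeakStarDeltaPoint f) (hf : ‖f‖ ≤ 1) {μ : NormedSpace.Dual ℝ ↥(Lip0 M z)}
    (hμ : μ ∈ FreeSpace M z) (hμ1 : ‖μ‖ ≤ 1) {α : ℝ} (hα : α ≤ 1) (hμf : 1 - α < μ f)
    {ε : ℝ} (hε : 0 < ε) :
    ∃ g : ↥(Lip0 M z), ‖g‖ ≤ 1 ∧ 1 - 2 * α < μ g ∧ 2 - ε ≤ ‖f - g‖ := by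
  have hμf_le : μ f ≤ ‖μ‖ :=
    (le_abs_self _).trans ((μ.le_opNorm f).trans (mul_le_of_le_one_right (norm_nonneg μ) hf))
  have hμ0 : 0 < ‖μ‖ := by linarith
  have hν : ‖μ‖⁻¹ • μ ∈ FreeSpace M z := Submodule.smul_mem _ _ hμ
  have hν1 : ‖‖μ‖⁻¹ • μ‖ = 1 := norm_smul_inv_norm (norm_pos_iff.mp hμ0)
  have hνf : 1 - α < (‖μ‖⁻¹ • μ) f := by
    rw [smul_apply, smul_eq_mul, inv_mul_eq_div, lt_div_iff₀ hμ0]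
    nlinarith
  obtain ⟨g, hg1, hνg, hfg⟩ := hΔ _ hν hν1 α (by linarith) hνf ε hε
  refine ⟨g, hg1, ?_, hfg⟩
  rw [smul_apply, smul_eq_mul, inv_mul_eq_div, lt_div_iff₀ hμ0] at hνg
  nlinarith

/-- The average of the molecules of `F` is a w*-slice functional containing `f`; an element
of that slice far from `f` is then almost norming on each molecule of `F`. -/
theorem IsLipWeakStarDeltaPoint.exists_far_of_mul_dist_lt_sub {f : ↥(Lip0 M z)}
    (hΔ : IsLipWeakStarDeltaPoint f) (hf : ‖f‖ ≤ 1) {F : Finset (M × M)} (hF : F.Nonempty)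
    {β : ℝ} (hβ : β ≤ 1)
    (hFf : ∀ w ∈ F, (1 - β) * dist w.1 w.2 < (f : M → ℝ) w.1 - (f : M → ℝ) w.2)
    {ε : ℝ} (hε : 0 < ε) :
    ∃ g : ↥(Lip0 M z), ‖g‖ ≤ 1 ∧
      (∀ w ∈ F, (1 - F.card * (2 * β)) * dist w.1 w.2 < (g : M → ℝ) w.1 - (g : M → ℝ) w.2) ∧
      2 - ε ≤ ‖f - g‖ := by
  set μ : NormedSpace.Dual ℝ ↥(Lip0 M z) := (F.card : ℝ)⁻¹ • ∑ w ∈ F, molecule M z w.1 w.2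
  have hcard : (0 : ℝ) < F.card := Nat.cast_pos.mpr (Finset.card_pos.mpr hF)
  have hμ_apply (g : ↥(Lip0 M z)) {c : ℝ} :
      c < μ g ↔ F.card * c < ∑ w ∈ F, molecule M z w.1 w.2 g := by
    simp only [μ, smul_apply, sum_apply, smul_eq_mul,
      inv_mul_eq_div, lt_div_iff₀ hcard, mul_comm c]
  have hpos : ∀ w ∈ F, 0 < dist w.1 w.2 := fun w hw => Lip0.dist_pos_of_mul_dist_lt_sub f (hFf w hw)
  have hμ : μ ∈ FreeSpace M z :=
    Submodule.smul_mem _ _ (Submodule.sum_mem _ fun w _ => molecule_mem_freeSpace w.1 w.2)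
  have hμ1 : ‖μ‖ ≤ 1 := by
    have hsum : ‖∑ w ∈ F, molecule M z w.1 w.2‖ ≤ F.card := by
      simpa using (norm_sum_le _ _).trans
        (F.sum_le_card_nsmul _ 1 fun w _ => norm_molecule_le (z := z) w.1 w.2)
    rw [norm_smul, norm_inv, Real.norm_natCast, inv_mul_le_iff₀ hcard, mul_one]
    exact hsum
  have hμf : 1 - β < μ f := by
    rw [hμ_apply, ← nsmul_eq_mul, ← Finset.sum_const]
    exact Finset.sum_lt_sum_of_nonempty hF fun w hw =>
      (lt_molecule_apply_iff (hpos w hw) f).mpr (hFf w hw)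
  obtain ⟨g, hg1, hμg, hfg⟩ := hΔ.exists_far_of_norm_le_one hf hμ hμ1 hβ hμf hε
  refine ⟨g, hg1, fun w hw => (lt_molecule_apply_iff (hpos w hw) g).mp ?_, hfg⟩
  refine lt_of_card_mul_one_sub_lt_sum (fun w _ => ?_) ((hμ_apply g).mp ?_) hw
  · exact (le_abs_self _).trans ((ContinuousLinearMap.le_opNorm _ g).trans
      (mul_le_one₀ (norm_molecule_le _ _) (norm_nonneg g) hg1))
  · exact hμg

end Lip0

theorem exists_le_dist_of_not_isLocal {M : Type*} [MetricSpace M] {z : M} {f : ↥(Lip0 M z)}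
    (hf : ‖f‖ = 1) (hloc : ¬ IsLocal f) :
    ∃ δ > 0, ∀ x y : M, (1 - δ) * dist x y < (f : M → ℝ) x - (f : M → ℝ) y → δ ≤ dist x y := by
  simp only [IsLocal, not_forall, not_exists, not_and, not_lt] at hloc
  obtain ⟨δ, hδ, hsep⟩ := hloc
  refine ⟨δ, hδ, fun x y hxy => ?_⟩
  have hd := Lip0.dist_pos_of_mul_dist_lt_sub f hxy
  refine hsep x y (dist_pos.mp hd) ?_
  rw [hf, lt_div_iff₀ hd]
  linarith

end DeltaPaper

/-- Proposition 4.2. If `M` is compact and `f ∈ S_{Lip₀(M)}` is a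
w*-Δ-point, then `f` is local. -/
theorem statement10 {M : Type*} [MetricSpace M] [CompactSpace M] (z : M)
    (f : ↥(Lip0 M z)) (hf : ‖f‖ = 1) (hΔ : IsLipWeakStarDeltaPoint f) :
    IsLocal f := by
  by_contra hloc
  obtain ⟨δ, hδ, hsep⟩ := exists_le_dist_of_not_isLocal hf hloc
  obtain ⟨K, hK⟩ := exists_card_le_forall_subset_ball_cover
    (isCompact_univ.totallyBounded : TotallyBounded (univ : Set (M × M))) (half_pos hδ)
  -- `2τ ≤ δ` makes the `(1 - 2τ)`-norming pairs long; `8Kτ < 1` keeps all `≤ K` molecules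
  -- half-normed by `g` after averaging.
  obtain ⟨τ, hτ, hτδ, hτK⟩ : ∃ τ > 0, 2 * τ ≤ δ ∧ 8 * (K + 1) * τ ≤ 1 := by
    refine ⟨min (δ / 2) (1 / (8 * (K + 1))), by positivity, ?_, ?_⟩
    · linarith [min_le_left (δ / 2) (1 / (8 * (K + 1) : ℝ))]
    · rw [← le_div_iff₀' (by positivity)]
      exact min_le_right _ _
  have hKτ : 0 ≤ (K : ℝ) * τ := by positivity
  obtain ⟨F, hFS, hFK, hcover⟩ :=
    hK {w | (1 - 2 * τ) * dist w.1 w.2 < (f : M → ℝ) w.1 - (f : M → ℝ) w.2}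
  have hF : F.Nonempty := by
    obtain ⟨x, y, hxy⟩ := Lip0.exists_mul_dist_lt_sub (f := f) (c := 1 - 2 * τ) (by linarith)
      (by linarith)
    obtain ⟨w, hw, -⟩ := mem_iUnion₂.mp (hcover (show (x, y) ∈ _ from hxy))
    exact ⟨w, hw⟩
  obtain ⟨g, hg, hgF, hfg⟩ := hΔ.exists_far_of_mul_dist_lt_sub hf.le hF (by linarith)
    (fun w hw => hFS hw) hτ
  obtain ⟨x, y, hfxy, hgyx⟩ :=
    exists_slopes_of_two_sub_lt_norm_sub hf.le hg (ε := 2 * τ) (by linarith) (by linarith)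
  obtain ⟨w, hwF, hw⟩ := mem_iUnion₂.mp (hcover (show (x, y) ∈ _ from hfxy))
  have hδxy : δ ≤ dist x y :=
    hsep x y ((mul_le_mul_of_nonneg_right (by linarith) dist_nonneg).trans_lt hfxy)
  have hδw : δ ≤ dist w.1 w.2 :=
    hsep w.1 w.2 ((mul_le_mul_of_nonneg_right (by linarith) dist_nonneg).trans_lt (hFS hwF))
  have hFKτ : (F.card : ℝ) * τ ≤ K * τ := by gcongr
  have hgw := (mul_le_mul_of_nonneg_right (show 1 / 2 ≤ 1 - F.card * (2 * (2 * τ)) by linarith)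
    dist_nonneg).trans_lt (hgF w hwF)
  have hgxy := (mul_le_mul_of_nonneg_right (show 1 / 2 ≤ 1 - 2 * τ by linarith)
    dist_nonneg).trans_lt hgyx
  linarith [Lip0.sub_add_sub_le_two_mul_dist hg w (x, y), dist_comm w (x, y), mem_ball.mp hw]
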